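/- If p and p+2 are both prime, p ≥ 5, and φ(p−1)/(p−1) ≤ φ(p+1)/(p+1), then ∏_{r | p−1, r prime, r ≥ 5} (1 + 1/(r−1)) ≥ 3/2. -/

import Mathlib

/-!
For twin primes `p ≥ 5` we have `2 ∣ p - 1`, `3 ∤ p - 1` and `6 ∣ p + 1`. Writing
`φ n / n = ∏_{r ∣ n} (1 - 1/r)` and separating the primes `2, 3` from those `≥ 5`, the hypothesis
becomes `A / 2 ≤ B / 3`, where `A` and `B` are the products over the prime factors `≥ 5` of `p - 1`
and `p + 1`. Since `B ≤ 1`, this gives `A ≤ 2/3`, and the target product is `A⁻¹` because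
`1 + 1/(r - 1) = (1 - 1/r)⁻¹`.
-/

open Finset

namespace Nat

theorem totient_div_self_eq_prod {n : ℕ} (hn : n ≠ 0) :
    (φ n : ℚ) / n = ∏ r ∈ n.primeFactors, (1 - (r : ℚ)⁻¹) := by
  rw [totient_eq_mul_prod_factors, mul_div_cancel_left₀ _ (by exact_mod_cast hn)]

theorem primeFactors_filter_lt_five {n : ℕ} (hn : n ≠ 0) :
    n.primeFactors.filter (· < 5) = ({2, 3} : Finset ℕ).filter (· ∣ n) := by
  ext r
  simp only [mem_filter, mem_primeFactors, mem_insert, mem_singleton]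
  constructor
  · rintro ⟨⟨hr, hrn, -⟩, hr5⟩
    have := hr.two_le
    interval_cases r
    · exact ⟨.inl rfl, hrn⟩
    · exact ⟨.inr rfl, hrn⟩
    · exact absurd hr (by decide)
  · rintro ⟨rfl | rfl, hrn⟩
    · exact ⟨⟨prime_two, hrn, hn⟩, by omega⟩
    · exact ⟨⟨prime_three, hrn, hn⟩, by omega⟩

theorem totient_div_self_eq_prod_two_three_mul_prod_five_le {n : ℕ} (hn : n ≠ 0) :
    (φ n : ℚ) / n = (∏ r ∈ ({2, 3} : Finset ℕ).filter (· ∣ n), (1 - (r : ℚ)⁻¹)) *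
      ∏ r ∈ n.primeFactors.filter (5 ≤ ·), (1 - (r : ℚ)⁻¹) := by
  rw [totient_div_self_eq_prod hn, ← prod_filter_mul_prod_filter_not n.primeFactors (5 ≤ ·)]
  simp only [not_le]
  rw [primeFactors_filter_lt_five hn, mul_comm]

theorem mod_two_eq_one_and_mod_three_eq_two_of_twin_primes {p : ℕ} (hp : p.Prime)
    (hp2 : (p + 2).Prime) (h5 : 5 ≤ p) : p % 2 = 1 ∧ p % 3 = 2 := by
  have h2 := hp.eq_one_or_self_of_dvd 2
  have h3 := hp.eq_one_or_self_of_dvd 3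
  have h3' := hp2.eq_one_or_self_of_dvd 3
  omega

end Nat

section OneSubInv

variable {s : Finset ℕ}

theorem prod_one_sub_inv_le_one (hs : ∀ r ∈ s, 1 ≤ r) : ∏ r ∈ s, (1 - (r : ℚ)⁻¹) ≤ 1 :=
  prod_le_one (fun r hr => sub_nonneg.2 (inv_le_one_of_one_le₀ (by exact_mod_cast hs r hr)))
    (fun r _ => sub_le_self _ (by positivity))

theorem prod_one_sub_inv_pos (hs : ∀ r ∈ s, 2 ≤ r) : 0 < ∏ r ∈ s, (1 - (r : ℚ)⁻¹) :=
  prod_pos fun r hr => sub_pos.2 (inv_lt_one_of_one_lt₀ (by exact_mod_cast hs r hr))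

theorem one_add_one_div_sub_one_eq_inv {K : Type*} [Field K] {r : K} (h0 : r ≠ 0) (h1 : r ≠ 1) :
    1 + 1 / (r - 1) = (1 - r⁻¹)⁻¹ := by
  have : r - 1 ≠ 0 := sub_ne_zero.2 h1
  field_simp
  ring

theorem prod_one_add_one_div_sub_one (hs : ∀ r ∈ s, 2 ≤ r) :
    ∏ r ∈ s, (1 + 1 / ((r : ℚ) - 1)) = (∏ r ∈ s, (1 - (r : ℚ)⁻¹))⁻¹ := by
  rw [← prod_inv_distrib]
  refine prod_congr rfl fun r hr => one_add_one_div_sub_one_eq_inv ?_ ?_ <;>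
    have := hs r hr <;> norm_cast <;> omega

end OneSubInv

theorem stmt_9 (p : ℕ) (hp : p.Prime) (hp2 : (p + 2).Prime) (h5 : 5 ≤ p)
    (h : (Nat.totient (p - 1) : ℚ) / ((p : ℚ) - 1) ≤ (Nat.totient (p + 1) : ℚ) / ((p : ℚ) + 1)) :
    (3 / 2 : ℚ) ≤ ∏ r ∈ (p - 1).primeFactors.filter (fun r => 5 ≤ r),
      (1 + 1 / ((r : ℚ) - 1)) := by
  have hmod := Nat.mod_two_eq_one_and_mod_three_eq_two_of_twin_primes hp hp2 h5
  have hdvd : 2 ∣ p - 1 ∧ ¬ 3 ∣ p - 1 ∧ 2 ∣ p + 1 ∧ 3 ∣ p + 1 := by omega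
  have hlarge : ∀ n : ℕ, ∀ r ∈ n.primeFactors.filter (5 ≤ ·), 2 ≤ r := fun n r hr =>
    le_trans (by norm_num) (mem_filter.1 hr).2
  rw [← Nat.cast_pred (by omega), ← Nat.cast_add_one,
    Nat.totient_div_self_eq_prod_two_three_mul_prod_five_le (by omega),
    Nat.totient_div_self_eq_prod_two_three_mul_prod_five_le (by omega)] at h
  simp only [filter_insert, filter_singleton, hdvd, ↓reduceIte, insert_empty_eq, prod_singleton,
    Nat.cast_ofNat, mem_singleton, Nat.reduceEqDiff, not_false_eq_true, prod_insert] at h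
  have hB := prod_one_sub_inv_le_one fun r hr => le_trans one_le_two (hlarge (p + 1) r hr)
  rw [prod_one_add_one_div_sub_one (hlarge _),
    le_inv_comm₀ (by norm_num) (prod_one_sub_inv_pos (hlarge _))]
  linarith
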